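/- arXiv:1811.03500 — 5 statements merged into one kernel-verified Lean document; each statement's English description precedes it below -/
import Mathlib

section
/- Let E be a real normed vector space, let W, X : E → E be vector fields that are differentiable at every point, and let a : E → ℝ be a function such that [W, X](x) = a(x) • X(x) for every x ∈ E. Then for every vector field V : E → E differentiable at every point, every differentiable function f : E → ℝ, and every x ∈ E, one has [W, V + f • X](x) = [W, V](x) + ((fderiv ℝ f x)(W x) + f(x)·a(x)) • X(x); in particular [W, V + f•X](x) − [W, V](x) is a scalar multiple of X(x). (This is the paper's proposition that the induced Lie derivative L̂_W on sections of TM/N, defined by L̂_W V̂ := [W, V] mod X, is well defined whenever W preserves the null structure, i.e. [W, X] mod X = 0.) -/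
open VectorField

theorem VectorField.lieBracket_add_smul_right_of_lieBracket_eq_smul
    {𝕜 E : Type*} [NontriviallyNormedField 𝕜] [NormedAddCommGroup E] [NormedSpace 𝕜 E]
    {W X V : E → E} {f : E → 𝕜} {x : E} {a : 𝕜}
    (hV : DifferentiableAt 𝕜 V x) (hf : DifferentiableAt 𝕜 f x) (hX : DifferentiableAt 𝕜 X x)
    (hWX : lieBracket 𝕜 W X x = a • X x) :
    lieBracket 𝕜 W (fun y => V y + f y • X y) x
      = lieBracket 𝕜 W V x + (fderiv 𝕜 f x (W x) + f x * a) • X x := by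
  change lieBracket 𝕜 W (V + fun y => f y • X y) x = _
  rw [lieBracket_add_right (W₁ := fun y => f y • X y) hV (hf.smul hX),
    lieBracket_smul_right hf hX, hWX, smul_smul, add_smul]

theorem lie_derivative_mod_X_well_defined_general
    {E : Type*} [NormedAddCommGroup E] [NormedSpace ℝ E]
    (W X : E → E) (a : E → ℝ)
    (hX : ∀ x, DifferentiableAt ℝ X x)
    (hWX : ∀ x, VectorField.lieBracket ℝ W X x = a x • X x) :
    ∀ (V : E → E) (f : E → ℝ),
      (∀ x, DifferentiableAt ℝ V x) → (∀ x, DifferentiableAt ℝ f x) →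
      ∀ x : E,
        VectorField.lieBracket ℝ W (fun y => V y + f y • X y) x
          = VectorField.lieBracket ℝ W V x
            + ((fderiv ℝ f x) (W x) + f x * a x) • X x ∧
        ∃ c : ℝ,
          VectorField.lieBracket ℝ W (fun y => V y + f y • X y) x
            - VectorField.lieBracket ℝ W V x = c • X x := by
  intro V f hV hf x
  have key := lieBracket_add_smul_right_of_lieBracket_eq_smul (hV x) (hf x) (hX x) (hWX x)
  exact ⟨key, _, by rw [key, add_sub_cancel_left]⟩

/-- If `W` preserves the null structure defined by the vector field `X`, i.e.
`[W, X] = a • X` pointwise, then the induced Lie derivative on sections of `TM/N`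
is well defined: replacing a representative `V` of a section by `V + f • X` changes
`[W, V]` only by a multiple of `X`, namely
`[W, V + f • X](x) = [W, V](x) + ((Df x)(W x) + f x * a x) • X x`. -/
theorem lie_derivative_mod_X_well_defined
    {E : Type*} [NormedAddCommGroup E] [NormedSpace ℝ E]
    (W X : E → E) (a : E → ℝ)
    (hW : ∀ x, DifferentiableAt ℝ W x)
    (hX : ∀ x, DifferentiableAt ℝ X x)
    (hWX : ∀ x, VectorField.lieBracket ℝ W X x = a x • X x) :
    ∀ (V : E → E) (f : E → ℝ),
      (∀ x, DifferentiableAt ℝ V x) → (∀ x, DifferentiableAt ℝ f x) →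
      ∀ x : E,
        VectorField.lieBracket ℝ W (fun y => V y + f y • X y) x
          = VectorField.lieBracket ℝ W V x
            + ((fderiv ℝ f x) (W x) + f x * a x) • X x ∧
        ∃ c : ℝ,
          VectorField.lieBracket ℝ W (fun y => V y + f y • X y) x
            - VectorField.lieBracket ℝ W V x = c • X x :=
  lie_derivative_mod_X_well_defined_general W X a hX hWX
end

section
/- Let E be a real normed vector space, let W, W', X : E → E be C² vector fields, and let a, b : E → ℝ be differentiable functions such that [W, X](x) = a(x) • X(x) and [W', X](x) = b(x) • X(x) for every x ∈ E. Then for every x ∈ E, [[W, W'], X](x) = ((fderiv ℝ b x)(W x) − (fderiv ℝ a x)(W' x)) • X(x); in particular [[W, W'], X](x) is a scalar multiple of X(x) for every x, so the set of vector fields preserving the null structure defined by X is closed under the Lie bracket. -/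
open VectorField

/- By the Leibniz identity `[[W, W'], X] = [W, [W', X]] - [W', [W, X]]`. Differentiating
`[W', X] = b • X` along `W` gives `(Db W) • X + b • [W, X] = (Db W + b a) • X`, and symmetrically
`[W', [W, X]] = (Da W' + a b) • X`; the terms `a b` cancel in the difference. -/

section

variable {𝕜 E : Type*} [NontriviallyNormedField 𝕜] [NormedAddCommGroup E] [NormedSpace 𝕜 E]

lemma lieBracket_lieBracket_eq_smul_of_eq_smul {V W X : E → E} {f g : E → 𝕜} {x : E}
    (hg : DifferentiableAt 𝕜 g x) (hX : DifferentiableAt 𝕜 X x)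
    (hWX : lieBracket 𝕜 W X x = f x • X x) (hVX : ∀ y, lieBracket 𝕜 V X y = g y • X y) :
    lieBracket 𝕜 W (lieBracket 𝕜 V X) x = (fderiv 𝕜 g x (W x) + g x * f x) • X x := by
  rw [funext hVX, lieBracket_smul_right hg hX, hWX, smul_smul, add_smul]

end

/-- If `W` and `W'` both preserve the null structure defined by the vector field `X`,
i.e. `[W, X] = a • X` and `[W', X] = b • X` pointwise, then so does their Lie bracket:
`[[W, W'], X](x) = ((Db x)(W x) - (Da x)(W' x)) • X x`, which is in particular a
scalar multiple of `X x` at every point. -/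
theorem lieBracket_preserves_null_structure
    {E : Type*} [NormedAddCommGroup E] [NormedSpace ℝ E]
    (W W' X : E → E) (a b : E → ℝ)
    (hW : ContDiff ℝ 2 W) (hW' : ContDiff ℝ 2 W') (hX : ContDiff ℝ 2 X)
    (ha : ∀ x, DifferentiableAt ℝ a x) (hb : ∀ x, DifferentiableAt ℝ b x)
    (hWX : ∀ x, VectorField.lieBracket ℝ W X x = a x • X x)
    (hW'X : ∀ x, VectorField.lieBracket ℝ W' X x = b x • X x) :
    ∀ x : E,
      VectorField.lieBracket ℝ (VectorField.lieBracket ℝ W W') X x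
        = ((fderiv ℝ b x) (W x) - (fderiv ℝ a x) (W' x)) • X x ∧
      ∃ c : ℝ,
        VectorField.lieBracket ℝ (VectorField.lieBracket ℝ W W') X x = c • X x := by
  intro x
  have hXx : DifferentiableAt ℝ X x := hX.differentiable two_ne_zero x
  have leibniz :=
    leibniz_identity_lieBracket (by simp) hW.contDiffAt hW'.contDiffAt hX.contDiffAt (x := x)
  rw [lieBracket_lieBracket_eq_smul_of_eq_smul (hb x) hXx (hWX x) hW'X,
    lieBracket_lieBracket_eq_smul_of_eq_smul (ha x) hXx (hW'X x) hWX] at leibniz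
  have key : lieBracket ℝ (lieBracket ℝ W W') X x
      = ((fderiv ℝ b x) (W x) - (fderiv ℝ a x) (W' x)) • X x := by
    rw [eq_sub_of_add_eq leibniz.symm]
    module
  exact ⟨key, _, key⟩
end

section
/- Let R be a commutative ring, V an R-module, κ ∈ V, and f ∈ Module.Dual R V a linear functional with f(κ) = 1. Then for every element x of the exterior algebra ExteriorAlgebra R V, one has ι(κ)·x = 0 if and only if there exists y with x = ι(κ)·y; moreover, in that case one may take y = ι_f(x), i.e. x = ι(κ)·ι_f(x). (This is the paper's proposition that every null k-form α, i.e. one with κ ∧ α = 0, can be written as α = κ ∧ β; equivalently, the cohomology of the operation δ_κ(α) = κ ∧ α is trivial.) -/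
namespace CliffordAlgebra

variable {R M : Type*} [CommRing R] [AddCommGroup M] [Module R M] {Q : QuadraticForm R M}

/-- Contracting `ι κ * x = 0` with `f` and using that `contractLeft f` is an antiderivation
gives `0 = f κ • x - ι κ * (f⌋x)`. -/
theorem smul_eq_ι_mul_contractLeft_of_ι_mul_eq_zero {f : Module.Dual R M} {κ : M}
    {x : CliffordAlgebra Q} (h : ι Q κ * x = 0) : f κ • x = ι Q κ * contractLeft f x := by
  have := contractLeft_ι_mul f κ x
  rwa [h, map_zero, eq_comm, sub_eq_zero] at this

theorem eq_ι_mul_contractLeft_of_ι_mul_eq_zero {f : Module.Dual R M} {κ : M} (hf : f κ = 1)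
    {x : CliffordAlgebra Q} (h : ι Q κ * x = 0) : x = ι Q κ * contractLeft f x := by
  rw [← smul_eq_ι_mul_contractLeft_of_ι_mul_eq_zero h, hf, one_smul]

end CliffordAlgebra

/-- If `f` is a linear functional with `f κ = 1`, then an element `x` of the exterior
algebra satisfies `ι κ * x = 0` (i.e. "κ ∧ x = 0", `x` is null) if and only if
`x = ι κ * y` for some `y`; moreover one can take `y = ι_f x`, the left contraction
of `x` by `f`. In other words, the cohomology of `δ_κ = κ ∧ ·` is trivial. -/
theorem null_form_factors_through_kappa
    {R : Type*} {V : Type*} [CommRing R] [AddCommGroup V] [Module R V]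
    (κ : V) (f : Module.Dual R V) (hf : f κ = 1) :
    ∀ x : ExteriorAlgebra R V,
      (ExteriorAlgebra.ι R κ * x = 0 ↔ ∃ y, x = ExteriorAlgebra.ι R κ * y) ∧
      (ExteriorAlgebra.ι R κ * x = 0 →
        x = ExteriorAlgebra.ι R κ * CliffordAlgebra.contractLeft f x) := by
  intro x
  have factor := CliffordAlgebra.eq_ι_mul_contractLeft_of_ι_mul_eq_zero (x := x) hf
  refine ⟨⟨fun h => ⟨_, factor h⟩, ?_⟩, factor⟩
  rintro ⟨y, rfl⟩
  rw [← mul_assoc, ExteriorAlgebra.ι_sq_zero, zero_mul]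
end

section
/- Let n ≥ 3. An n×n real matrix M satisfies (i) Mᵀ J M = J, (ii) det M = 1, and (iii) M·e₀ = ℓ·e₀ for some real ℓ > 0, if and only if there exist ℓ > 0, a vector v = (v_i)_{2 ≤ i ≤ n−1} ∈ ℝ^{n−2}, and an (n−2)×(n−2) real matrix A with Aᵀ A = 1 and det A = 1, such that the entries of M are: M₀₀ = ℓ, M₀₁ = −(1/2)ℓ⁻¹‖v‖², M₀ⱼ = vⱼ for j ≥ 2; M₁₀ = 0, M₁₁ = ℓ⁻¹, M₁ⱼ = 0 for j ≥ 2; Mᵢ₀ = 0, Mᵢ₁ = −ℓ⁻¹(A v)ᵢ, Mᵢⱼ = Aᵢⱼ for i, j ≥ 2. (This identifies the paper's group H⁺_L of eq. (2.1), restricted to ℓ > 0 and A ∈ SO(n−2), as the isotropy group of the oriented null line ℝ_{>0}·e₀ inside the special pseudo-orthogonal group of the Minkowski form.) -/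
/-- The Gram matrix `J` of the light-cone Minkowski form on `ℝⁿ`:
`J 0 1 = J 1 0 = 1`, `J i i = 1` for `i ≥ 2`, all other entries `0`. -/
def lightconeGram (n : ℕ) [NeZero n] : Matrix (Fin n) (Fin n) ℝ :=
  Matrix.of fun i j =>
    if (i = 0 ∧ j = 1) ∨ (i = 1 ∧ j = 0) ∨ (i = j ∧ 2 ≤ (i : ℕ)) then 1 else 0

/-- The embedding of the index set `{2, …, n−1}` (modelled by `Fin (n−2)`) into `Fin n`. -/
def lightconeEmb (n : ℕ) (hn : 3 ≤ n) (j : Fin (n - 2)) : Fin n :=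
  ⟨(j : ℕ) + 2, by omega⟩

/-!
The entry `(i, j)` of `MᵀJM` is `η(Meᵢ, Meⱼ) = M₀ᵢM₁ⱼ + M₁ᵢM₀ⱼ + Σₖ MₖᵢMₖⱼ`, the sum running over the
transverse indices `k ≥ 2`. Once the first column of `M` is `ℓe₀`, the entries `(0, 1)` and `(0, k)`
of `MᵀJM = J` force `M₁₁ = ℓ⁻¹` and `M₁ₖ = 0`; the entries `(k, l)` say that the transverse block `A`
is orthogonal; the entries `(1, k)` say `Aᵀw = -ℓ⁻¹v` for the transverse part `w` of the second
column, hence `w = -ℓ⁻¹Av`; and the entry `(1, 1)`, together with `‖Av‖ = ‖v‖`, determines `M₀₁`.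
Conversely, a matrix of this shape satisfies each of these equations. Such a matrix is block
triangular with diagonal blocks `ℓ`, `ℓ⁻¹`, `A`, so `det M = det A`.
-/

open Matrix

section OrthogonalMatrix

variable {ι R : Type*} [Fintype ι] [DecidableEq ι] [CommRing R] {A : Matrix ι ι R}

theorem Matrix.vecMul_mulVec_self_of_transpose_mul_self_eq_one (hA : Aᵀ * A = 1) (v : ι → R) :
    (A *ᵥ v) ᵥ* A = v := by
  rw [← vecMul_transpose, vecMul_vecMul, hA, vecMul_one]

theorem Matrix.eq_mulVec_of_vecMul_eq (hA : Aᵀ * A = 1) {w u : ι → R} (h : w ᵥ* A = u) :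
    w = A *ᵥ u := by
  rw [← h, ← vecMul_transpose, vecMul_vecMul, mul_eq_one_comm.mp hA, vecMul_one]

theorem Matrix.sum_mulVec_sq_of_transpose_mul_self_eq_one (hA : Aᵀ * A = 1) (v : ι → R) :
    ∑ i, (A *ᵥ v) i ^ 2 = ∑ i, v i ^ 2 := by
  simpa only [dotProduct, sq] using
    (dotProduct_mulVec (A *ᵥ v) A v).trans
      (congrArg (· ⬝ᵥ v) (vecMul_mulVec_self_of_transpose_mul_self_eq_one hA v))

end OrthogonalMatrix

section Lightcone

variable {m : ℕ}

theorem Fin.sum_univ_succ_succ {M : Type*} [AddCommMonoid M] (f : Fin (m + 2) → M) :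
    ∑ i, f i = f 0 + f 1 + ∑ k : Fin m, f k.succ.succ := by
  rw [Fin.sum_univ_succ, Fin.sum_univ_succ, Fin.succ_zero_eq_one]
  exact (add_assoc _ _ _).symm

theorem Fin.eq_zero_or_eq_one_or_exists_eq_succ_succ (i : Fin (m + 2)) :
    i = 0 ∨ i = 1 ∨ ∃ k : Fin m, i = k.succ.succ := by
  induction i using Fin.cases with
  | zero => exact .inl rfl
  | succ i =>
    induction i using Fin.cases with
    | zero => exact .inr (.inl Fin.succ_zero_eq_one)
    | succ k => exact .inr (.inr ⟨k, rfl⟩)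

theorem lightconeGram_zero : lightconeGram (m + 2) 0 = Pi.single 1 1 := by
  ext j
  simp [lightconeGram, Pi.single_apply]

theorem lightconeGram_one : lightconeGram (m + 2) 1 = Pi.single 0 1 := by
  ext j
  simp [lightconeGram, Pi.single_apply]

theorem lightconeGram_succ_succ (k : Fin m) :
    lightconeGram (m + 2) k.succ.succ = Pi.single k.succ.succ 1 := by
  ext j
  simp [lightconeGram, Pi.single_apply, eq_comm, Fin.succ_succ_ne_one]

theorem transpose_mul_lightconeGram_mul_apply (M : Matrix (Fin (m + 2)) (Fin (m + 2)) ℝ)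
    (i j : Fin (m + 2)) :
    (Mᵀ * lightconeGram (m + 2) * M) i j =
      M 0 i * M 1 j + M 1 i * M 0 j + ∑ k : Fin m, M k.succ.succ i * M k.succ.succ j := by
  rw [Matrix.mul_assoc, mul_apply, Fin.sum_univ_succ_succ]
  simp only [transpose_apply, mul_apply', lightconeGram_zero, lightconeGram_one,
    lightconeGram_succ_succ, single_dotProduct, one_mul]

theorem mulVec_single_zero_eq_smul_iff (M : Matrix (Fin (m + 2)) (Fin (m + 2)) ℝ) (ℓ : ℝ) :
    M *ᵥ Pi.single 0 1 = ℓ • Pi.single 0 1 ↔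
      M 0 0 = ℓ ∧ M 1 0 = 0 ∧ ∀ k : Fin m, M k.succ.succ 0 = 0 := by
  simp [funext_iff, Fin.forall_fin_succ, Pi.single_apply]

theorem Matrix.det_eq_mul_mul_det_submatrix_succ_succ {R : Type*} [CommRing R]
    (M : Matrix (Fin (m + 2)) (Fin (m + 2)) R) (h10 : M 1 0 = 0)
    (hcol : ∀ k : Fin m, M k.succ.succ 0 = 0) (hrow : ∀ k : Fin m, M 1 k.succ.succ = 0) :
    M.det = M 0 0 * M 1 1 * (M.submatrix (Fin.succ ∘ Fin.succ) (Fin.succ ∘ Fin.succ)).det := by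
  rw [det_succ_column_zero, Fin.sum_univ_succ, Finset.sum_eq_zero, add_zero, det_succ_row_zero,
    Fin.sum_univ_succ, Finset.sum_eq_zero]
  · simp [Fin.succ_zero_eq_one, submatrix_submatrix, mul_assoc]
  · intro k _
    simp [Fin.succ_zero_eq_one, hrow]
  · intro i _
    induction i using Fin.cases <;> simp [Fin.succ_zero_eq_one, h10, hcol]

theorem isotropy_entries_of_transpose_mul_lightconeGram_mul_eq
    {M : Matrix (Fin (m + 2)) (Fin (m + 2)) ℝ}
    (hM : Mᵀ * lightconeGram (m + 2) * M = lightconeGram (m + 2))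
    {ℓ : ℝ} (hℓ : ℓ ≠ 0) (h00 : M 0 0 = ℓ) (h10 : M 1 0 = 0)
    (hcol : ∀ k : Fin m, M k.succ.succ 0 = 0) {v : Fin m → ℝ} {A : Matrix (Fin m) (Fin m) ℝ}
    (hv : ∀ k : Fin m, M 0 k.succ.succ = v k)
    (hA : ∀ i j : Fin m, M i.succ.succ j.succ.succ = A i j) :
    Aᵀ * A = 1 ∧ M 0 1 = -(1/2) * ℓ⁻¹ * ∑ k, v k ^ 2 ∧ M 1 1 = ℓ⁻¹ ∧
      (∀ k : Fin m, M 1 k.succ.succ = 0) ∧ ∀ k : Fin m, M k.succ.succ 1 = -ℓ⁻¹ * (A *ᵥ v) k := by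
  have hG i j := (transpose_mul_lightconeGram_mul_apply M i j).symm.trans (congrFun₂ hM i j)
  have h11 : M 1 1 = ℓ⁻¹ := by
    refine eq_inv_of_mul_eq_one_right ?_
    simpa [h00, h10, hcol, lightconeGram_zero] using hG 0 1
  have hrow (k : Fin m) : M 1 k.succ.succ = 0 := by
    simpa [h00, h10, hcol, lightconeGram_zero, Pi.single_apply, Fin.succ_succ_ne_one, hℓ]
      using hG 0 k.succ.succ
  have hAA : Aᵀ * A = 1 := by
    ext i j
    simpa [hrow, hA, mul_apply, lightconeGram_succ_succ, one_apply, Pi.single_apply, eq_comm]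
      using hG i.succ.succ j.succ.succ
  have hwA : (fun k => M k.succ.succ 1) ᵥ* A = -ℓ⁻¹ • v := by
    ext j
    have h := hG 1 j.succ.succ
    simp only [hrow, h11, hv, hA, lightconeGram_one, mul_zero, zero_add,
      Pi.single_eq_of_ne (Fin.succ_ne_zero _)] at h
    simp only [vecMul, dotProduct, Pi.smul_apply, smul_eq_mul, neg_mul]
    linarith
  have hw (k : Fin m) : M k.succ.succ 1 = -ℓ⁻¹ * (A *ᵥ v) k := by
    simpa [mulVec_smul, mulVec_neg] using congrFun (eq_mulVec_of_vecMul_eq hAA hwA) k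
  refine ⟨hAA, ?_, h11, hrow, hw⟩
  have h := hG 1 1
  simp only [h11, hw, lightconeGram_one, Pi.single_eq_of_ne one_ne_zero, ← sq, mul_pow, neg_sq,
    ← Finset.mul_sum, sum_mulVec_sq_of_transpose_mul_self_eq_one hAA] at h
  linear_combination (ℓ / 2) * h - (M 0 1 + ℓ⁻¹ * (∑ k, v k ^ 2) / 2) * mul_inv_cancel₀ hℓ

theorem transpose_mul_lightconeGram_mul_eq_of_isotropy_entries
    {M : Matrix (Fin (m + 2)) (Fin (m + 2)) ℝ} {ℓ : ℝ} (hℓ : ℓ ≠ 0) {v : Fin m → ℝ}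
    {A : Matrix (Fin m) (Fin m) ℝ} (hAA : Aᵀ * A = 1)
    (h00 : M 0 0 = ℓ) (h01 : M 0 1 = -(1/2) * ℓ⁻¹ * ∑ k, v k ^ 2)
    (hv : ∀ k : Fin m, M 0 k.succ.succ = v k) (h10 : M 1 0 = 0) (h11 : M 1 1 = ℓ⁻¹)
    (hrow : ∀ k : Fin m, M 1 k.succ.succ = 0) (hcol : ∀ k : Fin m, M k.succ.succ 0 = 0)
    (hw : ∀ k : Fin m, M k.succ.succ 1 = -ℓ⁻¹ * (A *ᵥ v) k)
    (hA : ∀ i j : Fin m, M i.succ.succ j.succ.succ = A i j) :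
    Mᵀ * lightconeGram (m + 2) * M = lightconeGram (m + 2) := by
  have hww : ∑ k : Fin m, M k.succ.succ 1 * M k.succ.succ 1 = ℓ⁻¹ ^ 2 * ∑ k, v k ^ 2 := by
    simp only [hw, ← sq, mul_pow, neg_sq, ← Finset.mul_sum,
      sum_mulVec_sq_of_transpose_mul_self_eq_one hAA]
  have hwA (j : Fin m) : ∑ k : Fin m, M k.succ.succ 1 * A k j = -ℓ⁻¹ * v j := by
    simp only [hw, mul_assoc, ← Finset.mul_sum]
    exact congrArg _ (congrFun (vecMul_mulVec_self_of_transpose_mul_self_eq_one hAA v) j)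
  have hAw (j : Fin m) : ∑ k : Fin m, A k j * M k.succ.succ 1 = -ℓ⁻¹ * v j := by
    simpa only [mul_comm] using hwA j
  have hAA' (i j : Fin m) : ∑ k, A k i * A k j = if i = j then 1 else 0 := by
    simpa [mul_apply, one_apply] using congrFun₂ hAA i j
  ext i j
  rw [transpose_mul_lightconeGram_mul_apply]
  rcases i.eq_zero_or_eq_one_or_exists_eq_succ_succ with rfl | rfl | ⟨i, rfl⟩ <;>
  rcases j.eq_zero_or_eq_one_or_exists_eq_succ_succ with rfl | rfl | ⟨j, rfl⟩ <;>
  simp [h00, h01, hv, h10, h11, hrow, hcol, hA, hww, hwA, hAw, hAA', lightconeGram_zero,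
    lightconeGram_one, lightconeGram_succ_succ, Pi.single_apply, Fin.succ_succ_ne_one, hℓ, eq_comm]
  all_goals ring

end Lightcone

/-- Identification of the group `H⁺_L` of eq. (2.1) (with `ℓ > 0`, `A ∈ SO(n−2)`):
an `n×n` real matrix `M` preserves the light-cone Minkowski form (`MᵀJM = J`), has
`det M = 1`, and fixes the oriented null line `ℝ_{>0}·e₀` (`M e₀ = ℓ e₀`, `ℓ > 0`)
iff its entries are exactly those of eq. (2.1) for some `ℓ > 0`, `v ∈ ℝ^{n−2}` and
`A ∈ SO(n−2)`. -/
theorem isotropy_group_of_oriented_null_line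
    (n : ℕ) [NeZero n] (hn : 3 ≤ n) (M : Matrix (Fin n) (Fin n) ℝ) :
    (M.transpose * lightconeGram n * M = lightconeGram n ∧ M.det = 1 ∧
        ∃ ℓ : ℝ, 0 < ℓ ∧ M.mulVec (Pi.single 0 1 : Fin n → ℝ) = ℓ • (Pi.single 0 1 : Fin n → ℝ))
      ↔
    ∃ (ℓ : ℝ) (v : Fin (n - 2) → ℝ) (A : Matrix (Fin (n - 2)) (Fin (n - 2)) ℝ),
      0 < ℓ ∧ A.transpose * A = 1 ∧ A.det = 1 ∧
      M 0 0 = ℓ ∧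
      M 0 1 = -(1/2) * ℓ⁻¹ * ∑ k, v k ^ 2 ∧
      (∀ j, M 0 (lightconeEmb n hn j) = v j) ∧
      M 1 0 = 0 ∧
      M 1 1 = ℓ⁻¹ ∧
      (∀ j, M 1 (lightconeEmb n hn j) = 0) ∧
      (∀ i, M (lightconeEmb n hn i) 0 = 0) ∧
      (∀ i, M (lightconeEmb n hn i) 1 = -ℓ⁻¹ * A.mulVec v i) ∧
      (∀ i j, M (lightconeEmb n hn i) (lightconeEmb n hn j) = A i j) := by
  -- Now `Fin (m + 2 - 2)` is `Fin m` and `lightconeEmb (m + 2) hn j` is `j.succ.succ`, by `rfl`.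
  obtain ⟨m, rfl⟩ : ∃ m, n = m + 2 := ⟨n - 2, by omega⟩
  constructor
  · rintro ⟨hM, hdet, ℓ, hℓ, he⟩
    obtain ⟨h00, h10, hcol⟩ := (mulVec_single_zero_eq_smul_iff M ℓ).mp he
    set A := M.submatrix (Fin.succ ∘ Fin.succ) (Fin.succ ∘ Fin.succ)
    obtain ⟨hAA, h01, h11, hrow, hw⟩ :=
      isotropy_entries_of_transpose_mul_lightconeGram_mul_eq hM hℓ.ne' h00 h10 hcol
        (v := fun k => M 0 k.succ.succ) (A := A) (fun _ => rfl) (fun _ _ => rfl)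
    have hdetA : A.det = 1 := by
      rw [← hdet, det_eq_mul_mul_det_submatrix_succ_succ M h10 hcol hrow, h00, h11,
        mul_inv_cancel₀ hℓ.ne', one_mul]
    exact ⟨ℓ, _, A, hℓ, hAA, hdetA, h00, h01, fun _ => rfl, h10, h11, hrow, hcol, hw,
      fun _ _ => rfl⟩
  · rintro ⟨ℓ, v, A, hℓ, hAA, hdetA, h00, h01, hv, h10, h11, hrow, hcol, hw, hA⟩
    refine ⟨transpose_mul_lightconeGram_mul_eq_of_isotropy_entries hℓ.ne' hAA h00 h01 hv h10 h11
      hrow hcol hw hA, ?_, ℓ, hℓ, (mulVec_single_zero_eq_smul_iff M ℓ).mpr ⟨h00, h10, hcol⟩⟩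
    have hsub : M.submatrix (Fin.succ ∘ Fin.succ) (Fin.succ ∘ Fin.succ) = A := Matrix.ext hA
    rw [det_eq_mul_mul_det_submatrix_succ_succ M h10 hcol hrow, h00, h11,
      mul_inv_cancel₀ hℓ.ne', one_mul, hsub, hdetA]
end

section
/- Let n ≥ 2 and let W : ℝⁿ → ℝⁿ be a vector field differentiable at every point. Suppose (i) for every x ∈ ℝⁿ, (fderiv ℝ W x)(e₀) is a scalar multiple of e₀ (i.e. [W, ∂_u] is pointwise proportional to ∂_u), and (ii) for every x ∈ ℝⁿ there exists c ∈ ℝ such that fderiv ℝ (fun y => W y 1) x = c • π₁, where π₁ : ℝⁿ → ℝ is the linear functional y ↦ y 1. Then the v-component of W depends only on v, i.e. W(x) 1 = W(x') 1 whenever x 1 = x' 1, and for every i ≠ 0 the i-th component of W is independent of u, i.e. W(x + t•e₀) i = W(x) i for all x, t. (This is the paper's characterization (5.2) of vector fields preserving both X = ∂_u and κ = h dv up to rescaling: W = W^u(u,v,y)∂_u + W^v(v)∂_v + W^I(v,y)∂_I; note that for nowhere-vanishing h, the condition L_W(h dv) = b·h dv is equivalent to hypothesis (ii).) -/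
/-!
Both conclusions say that a component of `W` is constant along a line. A function with
everywhere vanishing derivative in a direction `d` is constant on every line parallel to `d`:
for `W¹` hypothesis (ii) gives such a direction `x' - x` whenever `x 1 = x' 1`, and for `Wⁱ`,
`i ≠ 0`, hypothesis (i) gives the direction `e₀`.
-/

open ContinuousLinearMap

theorem apply_add_smul_eq_of_fderiv_apply_eq_zero {E F : Type*}
    [NormedAddCommGroup E] [NormedSpace ℝ E] [NormedAddCommGroup F] [NormedSpace ℝ F]
    {f : E → F} (hf : Differentiable ℝ f) {d : E} (hd : ∀ x, fderiv ℝ f x d = 0)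
    (x : E) (t : ℝ) : f (x + t • d) = f x := by
  have hline : ∀ s : ℝ, HasDerivAt (fun s : ℝ => f (x + s • d)) 0 s := fun s => by
    have hpath : HasDerivAt (fun s : ℝ => x + s • d) d s := by
      simpa using ((hasDerivAt_id s).smul_const d).const_add x
    simpa [hd, Function.comp_def] using (hf _).hasFDerivAt.comp_hasDerivAt s hpath
  simpa using is_const_of_deriv_eq_zero (fun s => (hline s).differentiableAt)
    (fun s => (hline s).deriv) t 0

theorem apply_eq_of_fderiv_eq_smul_proj {n : ℕ} {f : (Fin n → ℝ) → ℝ} (hf : Differentiable ℝ f)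
    {j : Fin n} (hdf : ∀ x, ∃ c : ℝ, fderiv ℝ f x = c • proj j) {x x' : Fin n → ℝ}
    (hxx' : x j = x' j) : f x = f x' := by
  have hd : ∀ y, fderiv ℝ f y (x' - x) = 0 := fun y => by
    obtain ⟨c, hc⟩ := hdf y
    simp [hc, hxx']
  simpa using (apply_add_smul_eq_of_fderiv_apply_eq_zero hf hd x 1).symm

theorem apply_add_smul_single_eq {n : ℕ} {W : (Fin n → ℝ) → (Fin n → ℝ)}
    (hW : Differentiable ℝ W) {j : Fin n}
    (hdW : ∀ x, ∃ a : ℝ, fderiv ℝ W x (Pi.single j 1) = a • Pi.single j 1)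
    {i : Fin n} (hij : i ≠ j) (x : Fin n → ℝ) (t : ℝ) :
    W (x + t • Pi.single j 1) i = W x i := by
  have hd : ∀ y, fderiv ℝ (fun z => W z i) y (Pi.single j 1) = 0 := fun y => by
    obtain ⟨a, ha⟩ := hdW y
    simp [fderiv_apply (hW y), ha, Pi.single_eq_of_ne hij]
  exact apply_add_smul_eq_of_fderiv_apply_eq_zero (differentiable_pi.1 hW i) hd x t

theorem preserves_X_and_kappa_vector_fields_general
    (n : ℕ) [NeZero n] (W : (Fin n → ℝ) → (Fin n → ℝ))
    (hW : ∀ x, DifferentiableAt ℝ W x)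
    (h1 : ∀ x : Fin n → ℝ, ∃ a : ℝ,
        (fderiv ℝ W x) (Pi.single 0 1 : Fin n → ℝ)
          = a • (Pi.single 0 1 : Fin n → ℝ))
    (h2 : ∀ x : Fin n → ℝ, ∃ c : ℝ,
        fderiv ℝ (fun y => W y 1) x
          = c • (ContinuousLinearMap.proj 1 : (Fin n → ℝ) →L[ℝ] ℝ)) :
    (∀ x x' : Fin n → ℝ, x 1 = x' 1 → W x 1 = W x' 1) ∧
    (∀ i : Fin n, i ≠ 0 → ∀ (x : Fin n → ℝ) (t : ℝ),
        W (x + t • (Pi.single 0 1 : Fin n → ℝ)) i = W x i) :=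
  ⟨fun _ _ => apply_eq_of_fderiv_eq_smul_proj (differentiable_pi.1 hW 1) h2,
    fun _ hi => apply_add_smul_single_eq hW h1 hi⟩

/-- Characterization (5.2) of vector fields preserving both `X = ∂_u` and the null
structure of `κ = h dv`: if `W` is differentiable everywhere, `(DW x)(∂_u)` is
pointwise proportional to `∂_u` (i.e. `[W, ∂_u] ∥ ∂_u`), and the differential of the
component `W¹` is pointwise proportional to `dv` (the projection `π₁`), then
`W = W^u(u,v,y)∂_u + W^v(v)∂_v + W^I(v,y)∂_I`: the `v`-component of `W` depends only
on `v`, and every component `W i`, `i ≠ 0`, is independent of `u`. -/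
theorem preserves_X_and_kappa_vector_fields
    (n : ℕ) [NeZero n] (hn : 2 ≤ n) (W : (Fin n → ℝ) → (Fin n → ℝ))
    (hW : ∀ x, DifferentiableAt ℝ W x)
    (h1 : ∀ x : Fin n → ℝ, ∃ a : ℝ,
        (fderiv ℝ W x) (Pi.single 0 1 : Fin n → ℝ)
          = a • (Pi.single 0 1 : Fin n → ℝ))
    (h2 : ∀ x : Fin n → ℝ, ∃ c : ℝ,
        fderiv ℝ (fun y => W y 1) x
          = c • (ContinuousLinearMap.proj 1 : (Fin n → ℝ) →L[ℝ] ℝ)) :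
    (∀ x x' : Fin n → ℝ, x 1 = x' 1 → W x 1 = W x' 1) ∧
    (∀ i : Fin n, i ≠ 0 → ∀ (x : Fin n → ℝ) (t : ℝ),
        W (x + t • (Pi.single 0 1 : Fin n → ℝ)) i = W x i) :=
  preserves_X_and_kappa_vector_fields_general n W hW h1 h2
end
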